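/- arXiv:2007.03554 — 6 statements merged into one kernel-verified Lean document; each statement's English description precedes it below -/
import Mathlib

section
/- Let G be a finite group and x ∈ G. Define S_G(x) = {g ∈ G : ⟨x⟩ is subnormal in ⟨x, g⟩} and spr_G(x) = |S_G(x)|/|G|, and spr(G) = (1/|G|)·Σ_{x∈G} spr_G(x). If N is a normal subgroup of G, then spr(G/N) ≥ spr(G). -/
open Subgroup

/-- `H` is normal in `K` (both subgroups of an ambient group). -/
def NormalIn {G : Type*} [Group G] (H K : Subgroup G) : Prop :=
  H ≤ K ∧ (H.subgroupOf K).Normal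

/-- `H` is subnormal in `K`: there is a chain `H = H₀ ⊴ H₁ ⊴ ⋯ ⊴ Hₙ = K`. -/
def IsSubnormalIn {G : Type*} [Group G] (H K : Subgroup G) : Prop :=
  Relation.ReflTransGen NormalIn H K

/-- The Wielandt subnormalizer of `⟨x⟩` in `G`. -/
def subnormalizerSet {G : Type*} [Group G] (x : G) : Set G :=
  {g : G | IsSubnormalIn (zpowers x) (zpowers x ⊔ zpowers g)}

/-- `spr_G(x) = |S_G(x)|/|G|`. -/
noncomputable def spr {G : Type*} [Group G] (x : G) : ℚ :=
  (Nat.card (subnormalizerSet x) : ℚ) / (Nat.card G : ℚ)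

/-- `spr(G)`: the average of `spr_G(x)` over `x ∈ G`. -/
noncomputable def sprGrp (G : Type*) [Group G] [Finite G] : ℚ :=
  letI := Fintype.ofFinite G
  (∑ x : G, spr x) / (Nat.card G : ℚ)

/-! A homomorphism maps a chain of normal inclusions to a chain of normal inclusions, so
reduction modulo `N` sends `S_G(x)` into the preimage of `S_{G/N}(xN)`, whose size is
`|N| · |S_{G/N}(xN)|`. Hence `spr_G(x) ≤ spr_{G/N}(xN)` for every `x`, and averaging over `G`,
where each coset is hit exactly `|N|` times, gives the claim. -/

lemma NormalIn.map {G H : Type*} [Group G] [Group H] (f : G →* H) {A B : Subgroup G}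
    (h : NormalIn A B) : NormalIn (A.map f) (B.map f) := by
  obtain ⟨hAB, hnormal⟩ := h
  have hB := (normal_subgroupOf_iff_le_normalizer hAB).mp hnormal
  refine ⟨map_mono hAB, (normal_subgroupOf_iff_le_normalizer (map_mono hAB)).mpr ?_⟩
  exact (map_mono hB).trans (le_normalizer_map f)

lemma IsSubnormalIn.map {G H : Type*} [Group G] [Group H] (f : G →* H) {A B : Subgroup G}
    (h : IsSubnormalIn A B) : IsSubnormalIn (A.map f) (B.map f) :=
  Relation.ReflTransGen.lift (Subgroup.map f) (fun _ _ ↦ NormalIn.map f) _ _ h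

lemma mapsTo_subnormalizerSet {G H : Type*} [Group G] [Group H] (f : G →* H) (x : G) :
    Set.MapsTo f (subnormalizerSet x) (subnormalizerSet (f x)) := fun g hg ↦ by
  simpa only [subnormalizerSet, Set.mem_ofPred_eq, Subgroup.map_sup, MonoidHom.map_zpowers] using
    hg.map f

lemma card_subnormalizerSet_le {G : Type*} [Group G] [Finite G] (N : Subgroup G) [N.Normal]
    (x : G) :
    Nat.card (subnormalizerSet x) ≤
      Nat.card N * Nat.card (subnormalizerSet (x : G ⧸ N)) := by
  rw [← QuotientGroup.card_preimage_mk]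
  exact Nat.card_mono (Set.toFinite _) (mapsTo_subnormalizerSet (QuotientGroup.mk' N) x)

lemma spr_le_spr_mk {G : Type*} [Group G] [Finite G] (N : Subgroup G) [N.Normal] (x : G) :
    spr x ≤ spr (x : G ⧸ N) := by
  have hN : (0 : ℚ) < Nat.card N := mod_cast Nat.card_pos
  have hG : (Nat.card G : ℚ) = Nat.card N * Nat.card (G ⧸ N) :=
    mod_cast N.card_eq_card_quotient_mul_card_subgroup.trans (mul_comm _ _)
  calc spr x ≤ (Nat.card N * Nat.card (subnormalizerSet (x : G ⧸ N)) : ℚ) / Nat.card G := by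
        unfold spr; gcongr; exact_mod_cast card_subnormalizerSet_le N x
    _ = spr (x : G ⧸ N) := by rw [hG, mul_div_mul_left _ _ hN.ne']; rfl

open Finset in
lemma sum_comp_quotientMk {G M : Type*} [Group G] [AddCommMonoid M] [Fintype G] (s : Subgroup G)
    [Fintype (G ⧸ s)] (f : G ⧸ s → M) :
    ∑ x : G, f x = Nat.card s • ∑ y : G ⧸ s, f y := by
  classical
  rw [← Finset.sum_fiberwise' Finset.univ (QuotientGroup.mk : G → G ⧸ s), Finset.smul_sum]
  refine Finset.sum_congr rfl fun y _ ↦ ?_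
  have hfiber : #{x : G | (x : G ⧸ s) = y} = Nat.card s := by
    simpa [Nat.card_eq_fintype_card, ← Set.toFinset_card] using
      QuotientGroup.card_preimage_mk s {y}
  rw [Finset.sum_const, hfiber]

lemma sprGrp_eq_sum_div (G : Type*) [Group G] [Fintype G] :
    sprGrp G = (∑ x : G, spr x) / Nat.card G := by
  unfold sprGrp
  congr!

theorem stmt1 {G : Type*} [Group G] [Finite G] (N : Subgroup G) [N.Normal] :
    sprGrp G ≤ sprGrp (G ⧸ N) := by
  have := Fintype.ofFinite G
  have := Fintype.ofFinite (G ⧸ N)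
  have hN : (Nat.card N : ℚ) ≠ 0 := mod_cast Nat.card_pos.ne'
  have hG : (Nat.card G : ℚ) = Nat.card N * Nat.card (G ⧸ N) :=
    mod_cast N.card_eq_card_quotient_mul_card_subgroup.trans (mul_comm _ _)
  rw [sprGrp_eq_sum_div, sprGrp_eq_sum_div]
  calc (∑ x : G, spr x) / Nat.card G ≤ (∑ x : G, spr (x : G ⧸ N)) / Nat.card G := by
        gcongr with x; exact spr_le_spr_mk N x
    _ = (∑ y : G ⧸ N, spr y) / Nat.card (G ⧸ N) := by
        rw [sum_comp_quotientMk, nsmul_eq_mul, hG, mul_div_mul_left _ _ hN]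
end

section
/- Let V be a finite-dimensional vector space over a finite field F_q equipped with a nondegenerate alternating, sesquilinear, or symmetric bilinear form f, and let x be an endomorphism of V such that for all v, w ∈ V, f(v,w) = 0 if and only if f(v^x, w^x) = 0. If W is an ⟨x⟩-invariant subspace of dimension d (and the characteristic does not divide the order of x acting, so that Maschke applies), then there exists a nonsingular ⟨x⟩-invariant subspace Y of V of dimension k with d ≤ k ≤ 2d. -/
/-!
Let `R = W ⊓ W^⊥` be the radical of `W`. Its perp `R^⊥` contains `W`, is `g`-invariant because
`g` preserves orthogonality, and has codimension `dim R ≤ d`. Since `g` is annihilated by the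
separable polynomial `X^n - 1` it is semisimple (Maschke), so `R^⊥` has a `g`-invariant complement
`T`, and `Y = W ⊕ T` has dimension `d + dim R`. A vector `w + t` of `Y ⊓ Y^⊥` has `t ⊥ R`, so
`t ∈ R^⊥ ⊓ T = 0`; then `w ∈ R` is orthogonal to `R^⊥` and to `T`, hence to all of `V`.
-/

open Module Module.End Polynomial

namespace Module.End

variable {K M : Type*} [Field K] [AddCommGroup M] [Module K M]

theorem isSemisimple_of_pow_eq_one {f : End K M} {n : ℕ} (hf : f ^ n = 1) (hn : (n : K) ≠ 0) :
    f.IsSemisimple :=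
  isSemisimple_of_squarefree_aeval_eq_zero (separable_X_pow_sub_C 1 hn one_ne_zero).squarefree
    (by simp [hf])

theorem mem_invtSubmodule_iff_map_eq [FiniteDimensional K M] (g : M ≃ₗ[K] M)
    {p : Submodule K M} : p ∈ invtSubmodule (g : End K M) ↔ p.map (g : End K M) = p :=
  ⟨fun h ↦ Submodule.eq_of_le_of_finrank_eq ((mem_invtSubmodule_iff_map_le _).mp h)
      (LinearEquiv.finrank_map_eq g p),
    fun h ↦ (mem_invtSubmodule_iff_map_le _).mpr h.le⟩

theorem orthogonalBilin_mem_invtSubmodule [FiniteDimensional K M] {N : Type*} [AddCommGroup N]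
    [Module K N] {B : M →ₗ[K] M →ₗ[K] N} {g : M ≃ₗ[K] M}
    (hB : ∀ v w, B v w = 0 ↔ B (g v) (g w) = 0) {S : Submodule K M}
    (hS : S ∈ invtSubmodule (g : End K M)) :
    S.orthogonalBilin B ∈ invtSubmodule (g : End K M) := by
  rw [mem_invtSubmodule_iff_map_eq] at hS
  intro x hx m hm
  rw [← hS] at hm
  obtain ⟨s, hs, rfl⟩ := hm
  exact (hB s x).mp (hx s hs)

end Module.End

namespace Submodule

variable {K M : Type*} [Field K] [AddCommGroup M] [Module K M] {B : M →ₗ[K] M →ₗ[K] K}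

theorem le_orthogonalBilin_inf_orthogonalBilin (hrefl : B.IsRefl) (W : Submodule K M) :
    W ≤ (W ⊓ W.orthogonalBilin B).orthogonalBilin B :=
  (le_orthogonalBilin_orthogonalBilin hrefl).trans (orthogonalBilin_le inf_le_right)

theorem sup_inf_orthogonalBilin_eq_bot_of_isCompl (hrefl : B.IsRefl) (hnd : B.SeparatingLeft)
    {W T : Submodule K M} (hT : IsCompl ((W ⊓ W.orthogonalBilin B).orthogonalBilin B) T) :
    (W ⊔ T) ⊓ (W ⊔ T).orthogonalBilin B = ⊥ := by
  set R := W ⊓ W.orthogonalBilin B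
  rw [eq_bot_iff]
  rintro y ⟨hyY, hy⟩
  obtain ⟨w, hw, t, ht, rfl⟩ := mem_sup.mp hyY
  have htR : t ∈ R.orthogonalBilin B := fun r hr ↦ by
    have hr_y := hy r (mem_sup_left hr.1)
    rwa [map_add, le_orthogonalBilin_inf_orthogonalBilin hrefl W hw r hr, zero_add] at hr_y
  obtain rfl : t = 0 := disjoint_def.mp hT.disjoint t htR ht
  rw [add_zero] at hy ⊢
  have hwR : w ∈ R := ⟨hw, fun u hu ↦ hy u (mem_sup_left hu)⟩
  refine (mem_bot K).mpr (hnd w fun v ↦ hrefl _ _ ?_)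
  obtain ⟨p, hp, t, ht, rfl⟩ := mem_sup.mp (hT.sup_eq_top.symm ▸ mem_top : v ∈ _ ⊔ T)
  rw [map_add, LinearMap.add_apply, hrefl _ _ (hp w hwR), hy t (mem_sup_right ht), add_zero]

theorem finrank_sup_eq_of_isCompl_orthogonalBilin [FiniteDimensional K M] (hrefl : B.IsRefl) (hnd : B.SeparatingLeft)
    {W T : Submodule K M} (hT : IsCompl ((W ⊓ W.orthogonalBilin B).orthogonalBilin B) T) :
    finrank K ↥(W ⊔ T) = finrank K W + finrank K ↥(W ⊓ W.orthogonalBilin B) := by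
  set R := W ⊓ W.orthogonalBilin B
  have hWT : W ⊓ T = ⊥ :=
    (hT.disjoint.mono_left (le_orthogonalBilin_inf_orthogonalBilin hrefl W)).eq_bot
  have hsup := finrank_sup_add_finrank_inf_eq W T
  rw [hWT, finrank_bot, add_zero] at hsup
  have hcompl := finrank_add_eq_of_isCompl hT
  have hperp : finrank K (R.orthogonalBilin B) = finrank K M - finrank K R :=
    LinearMap.BilinForm.finrank_orthogonal (hrefl.nondegenerate_iff_separatingLeft.mpr hnd) R
  have hR := finrank_le R
  omega

end Submodule

theorem stmt8_general {F V : Type*} [Field F] [AddCommGroup V] [Module F V]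
    [FiniteDimensional F V]
    (B : V →ₗ[F] V →ₗ[F] F) (hrefl : B.IsRefl) (hnd : B.SeparatingLeft)
    (g : V ≃ₗ[F] V)
    (hord : ∃ n : ℕ, 0 < n ∧ g ^ n = 1 ∧ ¬ (ringChar F : ℕ) ∣ n)
    (hB : ∀ v w : V, B v w = 0 ↔ B (g v) (g w) = 0)
    (W : Submodule F V) (hW : W.map (g : V →ₗ[F] V) = W)
    (d : ℕ) (hd : Module.finrank F W = d) :
    ∃ Y : Submodule F V, Y.map (g : V →ₗ[F] V) = Y ∧
      d ≤ Module.finrank F Y ∧ Module.finrank F Y ≤ 2 * d ∧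
      Y ⊓ Y.orthogonalBilin B = ⊥ := by
  obtain ⟨n, -, hgn, hchar⟩ := hord
  have hss : IsSemisimple (g : End F V) := by
    refine isSemisimple_of_pow_eq_one ?_ (ringChar.spec F n |>.not.mpr hchar)
    rw [← LinearEquiv.automorphismGroup.toLinearMapMonoidHom_apply, ← map_pow, hgn, map_one]
  rw [← mem_invtSubmodule_iff_map_eq] at hW
  have hR : W ⊓ W.orthogonalBilin B ∈ invtSubmodule (g : End F V) :=
    invtSubmodule.inf_mem hW (orthogonalBilin_mem_invtSubmodule hB hW)
  obtain ⟨T, hT, hcompl⟩ := isSemisimple_iff.mp hss _ (orthogonalBilin_mem_invtSubmodule hB hR)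
  have hrank := Submodule.finrank_sup_eq_of_isCompl_orthogonalBilin hrefl hnd hcompl
  have hRd : finrank F ↥(W ⊓ W.orthogonalBilin B) ≤ d := hd ▸ Submodule.finrank_mono inf_le_left
  refine ⟨W ⊔ T, (mem_invtSubmodule_iff_map_eq g).mp (invtSubmodule.sup_mem hW hT), by omega,
    by omega, Submodule.sup_inf_orthogonalBilin_eq_bot_of_isCompl hrefl hnd hcompl⟩

/-- Lemma on nonsingular invariant subspaces: if `B` is a nondegenerate reflexive
(e.g. alternating or symmetric) bilinear form on a finite-dimensional space `V` over a
finite field, `g` is an invertible endomorphism of finite order invertible in the field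
(so that Maschke's theorem applies) preserving orthogonality of `B`, and `W` is a
`g`-invariant subspace of dimension `d`, then there is a nonsingular `g`-invariant
subspace `Y` with `d ≤ dim Y ≤ 2d`. -/
theorem stmt8 {F V : Type*} [Field F] [Finite F] [AddCommGroup V] [Module F V]
    [FiniteDimensional F V]
    (B : V →ₗ[F] V →ₗ[F] F) (hrefl : B.IsRefl) (hnd : B.SeparatingLeft)
    (g : V ≃ₗ[F] V)
    (hord : ∃ n : ℕ, 0 < n ∧ g ^ n = 1 ∧ ¬ (ringChar F : ℕ) ∣ n)
    (hB : ∀ v w : V, B v w = 0 ↔ B (g v) (g w) = 0)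
    (W : Submodule F V) (hW : W.map (g : V →ₗ[F] V) = W)
    (d : ℕ) (hd : Module.finrank F W = d) :
    ∃ Y : Submodule F V, Y.map (g : V →ₗ[F] V) = Y ∧
      d ≤ Module.finrank F Y ∧ Module.finrank F Y ≤ 2 * d ∧
      Y ⊓ Y.orthogonalBilin B = ⊥ :=
  stmt8_general B hrefl hnd g hord hB W hW d hd
end

section
/- Let G be a finite group, p a prime, P a Sylow p-subgroup of G, and H a subgroup with P ≤ H ≤ G. Then |𝔘_p(G)|/|G|_p ≥ |𝔘_p(H)|/|H|_p, where 𝔘_p denotes the set of p-elements and |·|_p the p-part of the order. -/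
/-- `x` is a `p`-element: its order is a power of `p`. -/
def IsPElement (p : ℕ) {G : Type*} [Group G] (x : G) : Prop :=
  ∃ k : ℕ, orderOf x = p ^ k

/-- The `p`-part of a natural number `n`. -/
def pPart (p n : ℕ) : ℕ := p ^ n.factorization p

/-- If `P ≤ H ≤ G` with `P` a Sylow `p`-subgroup of `G`, then
`|𝔘_p(G)|/|G|_p ≥ |𝔘_p(H)|/|H|_p`. -/
theorem stmt10 {G : Type*} [Group G] [Finite G] (p : ℕ) [Fact p.Prime]
    (P : Sylow p G) (H : Subgroup G) (hPH : (P : Subgroup G) ≤ H) :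
    (Nat.card {x : H | IsPElement p x} : ℚ) / (pPart p (Nat.card H) : ℚ) ≤
      (Nat.card {x : G | IsPElement p x} : ℚ) / (pPart p (Nat.card G) : ℚ) := by
  have hp := (Fact.out : p.Prime)
  have hG : Nat.card G ≠ 0 := Nat.card_pos.ne'
  have hH : Nat.card H ≠ 0 := Nat.card_pos.ne'
  -- the p-parts of |H| and |G| agree
  have hfac : (Nat.card H).factorization p = (Nat.card G).factorization p := by
    have h1 : (Nat.card H).factorization p ≤ (Nat.card G).factorization p :=
      (Nat.factorization_le_iff_dvd hH hG).2 (Subgroup.card_subgroup_dvd_card H) p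
    have hPcard : Nat.card P = p ^ (Nat.card G).factorization p :=
      P.card_eq_multiplicity
    have h2 : p ^ (Nat.card G).factorization p ∣ Nat.card H := by
      rw [← hPcard]
      exact Subgroup.card_dvd_of_le hPH
    have h3 : (Nat.card G).factorization p ≤ (Nat.card H).factorization p :=
      (Nat.Prime.pow_dvd_iff_le_factorization hp hH).1 h2
    exact le_antisymm h1 h3
  have hden : (pPart p (Nat.card H) : ℚ) = (pPart p (Nat.card G) : ℚ) := by
    simp [pPart, hfac]
  rw [hden]
  have hpos : (0 : ℚ) < (pPart p (Nat.card G) : ℚ) := by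
    exact_mod_cast pow_pos hp.pos _
  gcongr
  · apply Nat.card_le_card_of_injective
      (f := fun x : {x : H | IsPElement p x} =>
        (⟨(x.1 : G), by
          obtain ⟨k, hk⟩ := x.2
          exact ⟨k, by rw [Subgroup.orderOf_coe, hk]⟩⟩ :
          {x : G | IsPElement p x}))
    intro a b hab
    simp only [Subtype.mk.injEq] at hab
    exact Subtype.ext (Subtype.ext hab)
end

section
/- Let G be a finite group, p a prime, and N a normal subgroup of G. Then |𝔘_p(G/N)|/|G/N|_p ≤ |𝔘_p(G)|/|G|_p, with equality when N ≤ Z(G). -/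
section Aux

variable {G : Type*} [Group G] {p : ℕ} [Fact p.Prime]

lemma isPElement_of_dvd_pow {x : G} {k : ℕ} (h : orderOf x ∣ p ^ k) : IsPElement p x := by
  obtain ⟨j, -, hj⟩ := (Nat.dvd_prime_pow Fact.out).mp h
  exact ⟨j, hj⟩

lemma isPElement_of_mem {Q : Subgroup G} (hQ : IsPGroup p Q) {x : G} (hx : x ∈ Q) :
    IsPElement p x := by
  obtain ⟨k, hk⟩ := IsPGroup.iff_orderOf.mp hQ ⟨x, hx⟩
  exact ⟨k, by rwa [Subgroup.orderOf_mk] at hk⟩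

lemma isPElement_map {H : Type*} [Group H] (f : G →* H) {x : G} (h : IsPElement p x) :
    IsPElement p (f x) := by
  obtain ⟨k, hk⟩ := h
  exact isPElement_of_dvd_pow (hk ▸ orderOf_map_dvd f x)

lemma isPElement_inv {x : G} (h : IsPElement p x) : IsPElement p x⁻¹ := by
  obtain ⟨k, hk⟩ := h
  exact ⟨k, by rwa [orderOf_inv]⟩

lemma mul_isPElement {x y : G} (hc : Commute x y) (hx : IsPElement p x)
    (hy : IsPElement p y) : IsPElement p (x * y) := by
  obtain ⟨i, hi⟩ := hx
  obtain ⟨j, hj⟩ := hy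
  apply isPElement_of_dvd_pow (k := i + j)
  calc orderOf (x * y) ∣ Nat.lcm (orderOf x) (orderOf y) := hc.orderOf_mul_dvd_lcm
    _ ∣ p ^ (i + j) := Nat.lcm_dvd (by rw [hi]; exact pow_dvd_pow p (Nat.le_add_right i j))
        (by rw [hj]; exact pow_dvd_pow p (Nat.le_add_left j i))

lemma pPart_pos {n : ℕ} : 0 < pPart p n := pow_pos (Fact.out (p := p.Prime)).pos _

lemma pPart_mul {m n : ℕ} (hm : m ≠ 0) (hn : n ≠ 0) :
    pPart p (m * n) = pPart p m * pPart p n := by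
  unfold pPart
  rw [Nat.factorization_mul hm hn, Finsupp.add_apply, pow_add]

lemma card_le_pPart [Finite G] {K H : Subgroup G} (hK : IsPGroup p K) (hle : K ≤ H) :
    Nat.card K ≤ pPart p (Nat.card H) := by
  have h1 : IsPGroup p (K.subgroupOf H) := hK.comap_subtype
  obtain ⟨Q, hQ⟩ := h1.exists_le_sylow
  calc Nat.card K = Nat.card (K.subgroupOf H) :=
        (Nat.card_congr (Subgroup.subgroupOfEquivOfLe hle).toEquiv).symm
    _ ≤ Nat.card Q := Subgroup.card_le_of_le hQ
    _ = pPart p (Nat.card H) := Q.card_eq_multiplicity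

end Aux

section Fiber

variable {G : Type*} [Group G] {p : ℕ} [Fact p.Prime] [Finite G]

lemma fiber_card_ge (N : Subgroup G) [N.Normal] {y : G ⧸ N} (hy : IsPElement p y) :
    pPart p (Nat.card N) ≤
      Nat.card {x : G // IsPElement p x ∧ (QuotientGroup.mk x : G ⧸ N) = y} := by
  obtain ⟨k, hk⟩ := hy
  set π : G →* G ⧸ N := QuotientGroup.mk' N with hπ
  have hπs : Function.Surjective π := QuotientGroup.mk'_surjective N
  set H : Subgroup G := Subgroup.comap π (Subgroup.zpowers y) with hH
  have hNH : N ≤ H := by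
    intro n hn
    have h1 : π n = 1 := by
      rw [hπ, QuotientGroup.mk'_apply, QuotientGroup.eq_one_iff]; exact hn
    have : π n ∈ Subgroup.zpowers y := by rw [h1]; exact one_mem _
    exact this
  obtain ⟨P⟩ : Nonempty (Sylow p H) := inferInstance
  set Q : Subgroup G := Subgroup.map H.subtype (P : Subgroup H) with hQdef
  have hQH : Q ≤ H := by rw [hQdef]; exact Subgroup.map_subtype_le _
  have hQp : IsPGroup p Q := P.isPGroup'.map H.subtype
  have hcardZ : Nat.card (Subgroup.zpowers y) = p ^ k := by rw [Nat.card_zpowers, hk]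
  set ψ : H →* G ⧸ N := π.comp H.subtype with hψ
  have hrange : ψ.range = Subgroup.zpowers y := by
    rw [hψ, MonoidHom.range_comp, Subgroup.range_subtype, hH,
      Subgroup.map_comap_eq_self_of_surjective hπs]
  have hker : ψ.ker = N.subgroupOf H := by
    rw [hψ, ← MonoidHom.comap_ker, hπ, QuotientGroup.ker_mk']; rfl
  have hcardH : Nat.card H = p ^ k * Nat.card N := by
    rw [Subgroup.card_eq_card_quotient_mul_card_subgroup ψ.ker]
    congr 1
    · rw [← hcardZ, ← hrange]
      exact Nat.card_congr (QuotientGroup.quotientKerEquivRange ψ).toEquiv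
    · rw [hker]
      exact Nat.card_congr (Subgroup.subgroupOfEquivOfLe hNH).toEquiv
  have hcardQ : Nat.card Q = pPart p (Nat.card N) * p ^ k := by
    have h1 : Nat.card Q = Nat.card P :=
      (Nat.card_congr (Subgroup.equivMapOfInjective _ _ H.subtype_injective).toEquiv).symm
    rw [h1, Sylow.card_eq_multiplicity, hcardH,
      Nat.factorization_mul (pow_pos (Fact.out (p := p.Prime)).pos k).ne' Nat.card_pos.ne', Finsupp.add_apply,
      Nat.Prime.factorization_pow Fact.out, Finsupp.single_eq_same, pow_add]
    unfold pPart
    ring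
  set ψQ : Q →* G ⧸ N := π.comp Q.subtype with hψQ
  have hkerQ : ψQ.ker = N.subgroupOf Q := by
    rw [hψQ, ← MonoidHom.comap_ker, hπ, QuotientGroup.ker_mk']; rfl
  have hkerQ_le : Nat.card ψQ.ker ≤ pPart p (Nat.card N) := by
    have h2 : Subgroup.map Q.subtype ψQ.ker = Q ⊓ N := by
      rw [hkerQ]
      show Subgroup.map Q.subtype (Subgroup.comap Q.subtype N) = Q ⊓ N
      rw [Subgroup.map_comap_eq, Subgroup.range_subtype]
    have h3 : Nat.card ψQ.ker = Nat.card (Q ⊓ N : Subgroup G) := by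
      rw [← h2]
      exact Nat.card_congr (Subgroup.equivMapOfInjective _ _ Q.subtype_injective).toEquiv
    rw [h3]
    exact card_le_pPart hQp.to_inf_left inf_le_right
  have hrangeQ_le : ψQ.range ≤ Subgroup.zpowers y := by
    rw [hψQ, MonoidHom.range_comp, Subgroup.range_subtype]
    calc Subgroup.map π Q ≤ Subgroup.map π H := Subgroup.map_mono hQH
      _ = Subgroup.zpowers y := by rw [hH, Subgroup.map_comap_eq_self_of_surjective hπs]
  have hcard_rangeQ_le : Nat.card ψQ.range ≤ p ^ k := by
    rw [← hcardZ]; exact Subgroup.card_le_of_le hrangeQ_le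
  have hQsplit : Nat.card Q = Nat.card ψQ.range * Nat.card ψQ.ker := by
    rw [Subgroup.card_eq_card_quotient_mul_card_subgroup ψQ.ker]
    congr 1
    exact Nat.card_congr (QuotientGroup.quotientKerEquivRange ψQ).toEquiv
  have hpk_pos : 0 < p ^ k := pow_pos (Fact.out (p := p.Prime)).pos _
  have hcc : Nat.card ψQ.range * Nat.card ψQ.ker = pPart p (Nat.card N) * p ^ k := by
    rw [← hQsplit, hcardQ]
  have hppos : 0 < pPart p (Nat.card N) := pPart_pos
  have hker_ge : pPart p (Nat.card N) ≤ Nat.card ψQ.ker := by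
    nlinarith [hcc, hcard_rangeQ_le, hkerQ_le, hppos, hpk_pos]
  have hrange_eq : ψQ.range = Subgroup.zpowers y := by
    apply Subgroup.eq_of_le_of_card_ge hrangeQ_le
    rw [hcardZ]
    nlinarith [hcc, hcard_rangeQ_le, hkerQ_le, hppos, hpk_pos]
  have hy_mem : y ∈ ψQ.range := hrange_eq ▸ Subgroup.mem_zpowers y
  obtain ⟨q, hq⟩ := hy_mem
  refine le_trans hker_ge (Nat.card_le_card_of_injective
    (fun n : ψQ.ker => (⟨((q * (n : Q) : Q) : G),
      isPElement_of_mem hQp (q * (n : Q)).2, by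
        have h1 : ψQ (q * (n : Q)) = y := by
          rw [map_mul, hq, MonoidHom.mem_ker.mp n.2, mul_one]
        simpa [hψQ, hπ] using h1⟩ :
      {x : G // IsPElement p x ∧ (QuotientGroup.mk x : G ⧸ N) = y})) ?_)
  intro n₁ n₂ h
  simp only [Subtype.mk.injEq, SetLike.coe_eq_coe] at h
  exact Subtype.ext (mul_left_cancel h)

end Fiber

section Central

variable {G : Type*} [Group G] {p : ℕ} [Fact p.Prime] [Finite G]

lemma fiber_card_le (N : Subgroup G) [N.Normal] (hc : N ≤ Subgroup.center G) (y : G ⧸ N) :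
    Nat.card {x : G // IsPElement p x ∧ (QuotientGroup.mk x : G ⧸ N) = y} ≤
      pPart p (Nat.card N) := by
  by_cases hne : Nonempty {x : G // IsPElement p x ∧ (QuotientGroup.mk x : G ⧸ N) = y}
  swap
  · rw [not_nonempty_iff] at hne
    rw [Nat.card_of_isEmpty]
    exact Nat.zero_le _
  obtain ⟨⟨x₀, hx₀p, hx₀y⟩⟩ := hne
  let T : Subgroup G :=
    { carrier := {n | n ∈ N ∧ IsPElement p n}
      one_mem' := ⟨N.one_mem, 0, by simp⟩
      mul_mem' := by
        rintro a b ⟨haN, hap⟩ ⟨hbN, hbp⟩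
        refine ⟨N.mul_mem haN hbN, ?_⟩
        have hcomm : Commute a b := ((Subgroup.mem_center_iff.mp (hc haN)) b).symm
        exact mul_isPElement hcomm hap hbp
      inv_mem' := by
        rintro a ⟨haN, hap⟩
        exact ⟨N.inv_mem haN, isPElement_inv hap⟩ }
  have hTN : T ≤ N := fun a ha => ha.1
  have hTp : IsPGroup p T := by
    rw [IsPGroup.iff_orderOf]
    intro g
    obtain ⟨-, j, hj⟩ := g.2
    exact ⟨j, by rw [← Subgroup.orderOf_coe g]; exact hj⟩
  have key : ∀ x : {x : G // IsPElement p x ∧ (QuotientGroup.mk x : G ⧸ N) = y},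
      x₀⁻¹ * x.1 ∈ T := by
    rintro ⟨x, hxp, hxy⟩
    have hn : x₀⁻¹ * x ∈ N := QuotientGroup.eq.mp (hx₀y.trans hxy.symm)
    have hcentral : x₀⁻¹ * x ∈ Subgroup.center G := hc hn
    have hcomm : Commute x₀ x := by
      have h1 := Subgroup.mem_center_iff.mp hcentral x₀
      show x₀ * x = x * x₀
      calc x₀ * x = x₀ * (x₀ * (x₀⁻¹ * x)) := by group
        _ = x₀ * (x₀⁻¹ * x * x₀) := by rw [h1]
        _ = x * x₀ := by group
    exact ⟨hn, mul_isPElement hcomm.inv_left (isPElement_inv hx₀p) hxp⟩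
  refine le_trans (Nat.card_le_card_of_injective
    (fun x => (⟨x₀⁻¹ * x.1, key x⟩ : T)) ?_) (card_le_pPart hTp hTN)
  intro x₁ x₂ h
  simp only [Subtype.mk.injEq] at h
  exact Subtype.ext (mul_left_cancel h)

end Central

lemma card_eq_sum_card_fibers {α β : Type*} [Finite α] [Fintype β] (f : α → β) :
    Nat.card α = ∑ y : β, Nat.card {x : α // f x = y} := by
  classical
  have := Fintype.ofFinite α
  simp_rw [Nat.card_eq_fintype_card]
  rw [← Fintype.card_sigma]
  exact (Fintype.card_congr (Equiv.sigmaFiberEquiv f)).symm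

/-- For `N ⊴ G`, `|𝔘_p(G/N)|/|G/N|_p ≤ |𝔘_p(G)|/|G|_p`, with equality when
`N ≤ Z(G)`. -/
theorem stmt11 {G : Type*} [Group G] [Finite G] (p : ℕ) [Fact p.Prime]
    (N : Subgroup G) [N.Normal] :
    ((Nat.card {x : G ⧸ N | IsPElement p x} : ℚ) / (pPart p (Nat.card (G ⧸ N)) : ℚ) ≤
      (Nat.card {x : G | IsPElement p x} : ℚ) / (pPart p (Nat.card G) : ℚ)) ∧
    (N ≤ Subgroup.center G →
      (Nat.card {x : G ⧸ N | IsPElement p x} : ℚ) / (pPart p (Nat.card (G ⧸ N)) : ℚ) =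
        (Nat.card {x : G | IsPElement p x} : ℚ) / (pPart p (Nat.card G) : ℚ)) := by
  classical
  have finB : Fintype {y : G ⧸ N // IsPElement p y} := Fintype.ofFinite _
  set f : {x : G // IsPElement p x} → {y : G ⧸ N // IsPElement p y} :=
    fun x => ⟨QuotientGroup.mk x.1,
      by simpa using isPElement_map (QuotientGroup.mk' N) x.2⟩ with hf
  have hcardA : Nat.card {x : G // IsPElement p x}
      = ∑ y : {y : G ⧸ N // IsPElement p y}, Nat.card {x // f x = y} :=
    card_eq_sum_card_fibers f
  have hfib : ∀ y : {y : G ⧸ N // IsPElement p y},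
      Nat.card {x : {x : G // IsPElement p x} // f x = y}
        = Nat.card {x : G // IsPElement p x ∧ (QuotientGroup.mk x : G ⧸ N) = y.1} := by
    intro y
    apply Nat.card_congr
    exact ⟨fun x => ⟨x.1.1, x.1.2, congrArg Subtype.val x.2⟩,
      fun x => ⟨⟨x.1, x.2.1⟩, Subtype.ext x.2.2⟩,
      fun x => rfl, fun x => rfl⟩
  set c := pPart p (Nat.card N) with hcdef
  have hineq : Nat.card {y : G ⧸ N // IsPElement p y} * c
      ≤ Nat.card {x : G // IsPElement p x} := by
    rw [hcardA]
    calc Nat.card {y : G ⧸ N // IsPElement p y} * c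
        = ∑ _y : {y : G ⧸ N // IsPElement p y}, c := by
          rw [Finset.sum_const, Finset.card_univ, smul_eq_mul, Nat.card_eq_fintype_card]
      _ ≤ ∑ y : {y : G ⧸ N // IsPElement p y}, Nat.card {x // f x = y} :=
          Finset.sum_le_sum fun y _ => by rw [hfib y]; exact fiber_card_ge N y.2
  have heq : N ≤ Subgroup.center G →
      Nat.card {x : G // IsPElement p x}
        = Nat.card {y : G ⧸ N // IsPElement p y} * c := by
    intro hcen
    rw [hcardA]
    calc (∑ y : {y : G ⧸ N // IsPElement p y}, Nat.card {x // f x = y})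
        = ∑ _y : {y : G ⧸ N // IsPElement p y}, c := by
          refine Finset.sum_congr rfl fun y _ => ?_
          rw [hfib y]
          exact le_antisymm (fiber_card_le N hcen y.1) (fiber_card_ge N y.2)
      _ = Nat.card {y : G ⧸ N // IsPElement p y} * c := by
          rw [Finset.sum_const, Finset.card_univ, smul_eq_mul, Nat.card_eq_fintype_card]
  have hGsplit : (pPart p (Nat.card G) : ℚ) = (pPart p (Nat.card (G ⧸ N)) : ℚ) * c := by
    rw [Subgroup.card_eq_card_quotient_mul_card_subgroup N,
      pPart_mul Nat.card_pos.ne' Nat.card_pos.ne']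
    push_cast
    rfl
  have hbpos : (0 : ℚ) < (pPart p (Nat.card (G ⧸ N)) : ℚ) := by
    exact_mod_cast pPart_pos (p := p)
  have hcpos : (0 : ℚ) < (c : ℚ) := by exact_mod_cast pPart_pos (p := p)
  have hsetA : Nat.card {x : G | IsPElement p x} = Nat.card {x : G // IsPElement p x} := rfl
  have hsetB : Nat.card {y : G ⧸ N | IsPElement p y}
      = Nat.card {y : G ⧸ N // IsPElement p y} := rfl
  constructor
  · rw [hsetA, hsetB, hGsplit, div_le_div_iff₀ hbpos (by positivity)]
    have : (Nat.card {y : G ⧸ N // IsPElement p y} * c : ℚ)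
        ≤ (Nat.card {x : G // IsPElement p x} : ℚ) := by exact_mod_cast hineq
    nlinarith [hbpos.le]
  · intro hcen
    rw [hsetA, hsetB, hGsplit, heq hcen]
    push_cast
    field_simp
end

section
/- Let G be a finite group, p a prime, H a subgroup of G normalized by a p-element g of G, and Q a Sylow p-subgroup of H. Then the coset Hg contains at least |Q| p-elements, i.e., |𝔘_p(Hg)| ≥ |Q|. -/
/-!
Pass to the normalizer `N` of `H`, in which `H` is normal. Choose a Sylow `p`-subgroup `S` of `N`
containing `g` and a Sylow `p`-subgroup of `N` containing `Q`; the latter is conjugate to `S` by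
some `n ∈ N`, so `nQn⁻¹` lies in both `H` and `S`. Then `x ↦ x * g` embeds `nQn⁻¹` into `Hg ∩ S`,
and every element of the `p`-group `S` is a `p`-element.
-/

section

open Subgroup
open scoped Pointwise

variable {G : Type*} [Group G] {p : ℕ}

theorem IsPElement.of_mem [Fact p.Prime] {S : Subgroup G} (hS : IsPGroup p S) {x : G}
    (hx : x ∈ S) : IsPElement p x := by
  obtain ⟨k, hk⟩ := IsPGroup.iff_orderOf.mp hS ⟨x, hx⟩
  exact ⟨k, by rwa [Subgroup.orderOf_mk] at hk⟩

theorem IsPElement.isPGroup_zpowers {g : G} (hg : IsPElement p g) : IsPGroup p (zpowers g) := by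
  obtain ⟨k, hk⟩ := hg
  exact IsPGroup.of_card (by rw [Nat.card_zpowers, hk])

theorem isPElement_coe_iff {M : Subgroup G} {x : M} : IsPElement p (x : G) ↔ IsPElement p x := by
  simp only [IsPElement, Subgroup.orderOf_coe]

/-- The set `𝔘_p(Kg)`. -/
def pElementsOfCoset (p : ℕ) (K : Subgroup G) (g : G) : Set G :=
  {x | (∃ k ∈ K, x = k * g) ∧ IsPElement p x}

theorem card_le_card_pElementsOfCoset [Finite G] [Fact p.Prime] {K S T : Subgroup G} {g : G}
    (hS : IsPGroup p S) (hg : g ∈ S) (hTK : T ≤ K) (hTS : T ≤ S) :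
    Nat.card T ≤ Nat.card (pElementsOfCoset p K g) := by
  refine Nat.card_le_card_of_injective
    (fun x ↦ ⟨x * g, ⟨x, hTK x.2, rfl⟩, .of_mem hS (S.mul_mem (hTS x.2) hg)⟩) ?_
  intro x y hxy
  exact Subtype.ext (mul_right_cancel (congrArg Subtype.val hxy))

theorem card_sylow_le_card_pElementsOfCoset [Finite G] [Fact p.Prime] {K : Subgroup G}
    [K.Normal] (Q : Sylow p K) {g : G} (hg : IsPElement p g) :
    Nat.card Q ≤ Nat.card (pElementsOfCoset p K g) := by
  obtain ⟨S, hgS⟩ := hg.isPGroup_zpowers.exists_le_sylow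
  obtain ⟨S', hS'⟩ := Q.exists_comap_subtype_eq
  obtain ⟨n, rfl⟩ := MulAction.exists_smul_eq G S' S
  let T := MulAut.conj n • (Q : Subgroup K).map K.subtype
  have hTK : T ≤ K := by
    rw [← Normal.conj_smul_eq_self n K]
    exact pointwise_smul_le_pointwise_smul_iff.mpr (map_subtype_le _)
  have hTS : T ≤ (n • S' : Sylow p G) := by
    rw [Sylow.coe_subgroup_smul]
    exact pointwise_smul_le_pointwise_smul_iff.mpr (by rw [← hS']; exact map_comap_le _ _)
  calc Nat.card Q = Nat.card T := by
        rw [Nat.card_congr (equivSMul _ _).toEquiv.symm,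
          card_map_of_injective K.subtype_injective]
    _ ≤ _ := card_le_card_pElementsOfCoset (Sylow.isPGroup' _) (hgS (mem_zpowers g)) hTK hTS

theorem card_pElementsOfCoset_subgroupOf_le [Finite G] {M : Subgroup G} (K : Subgroup G)
    (g : M) : Nat.card (pElementsOfCoset p (K.subgroupOf M) g) ≤
      Nat.card (pElementsOfCoset p K (g : G)) := by
  refine Nat.card_le_card_of_injective
    (fun x ↦ ⟨x.1, ?_, isPElement_coe_iff.mpr x.2.2⟩) ?_
  · obtain ⟨k, hk, hx⟩ := x.2.1
    exact ⟨k, hk, by rw [hx]; rfl⟩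
  · intro x y hxy
    exact Subtype.ext (Subtype.ext (congrArg Subtype.val hxy :))

end

/-- If `H` is a subgroup normalized by a `p`-element `g`, and `Q` is a Sylow
`p`-subgroup of `H`, then the coset `Hg` contains at least `|Q|` `p`-elements. -/
theorem stmt12 {G : Type*} [Group G] [Finite G] (p : ℕ) [Fact p.Prime]
    (H : Subgroup G) (g : G) (hg : g ∈ Subgroup.normalizer (H : Set G)) (hgp : IsPElement p g)
    (Q : Sylow p H) :
    Nat.card (Q : Subgroup H) ≤
      Nat.card {x : G | (∃ h ∈ H, x = h * g) ∧ IsPElement p x} := by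
  let N := Subgroup.normalizer (H : Set G)
  let g' : N := ⟨g, hg⟩
  obtain ⟨Q'⟩ : Nonempty (Sylow p (H.subgroupOf N)) := inferInstance
  calc Nat.card Q = Nat.card Q' := by
        rw [Sylow.card_eq_multiplicity, Sylow.card_eq_multiplicity,
          Nat.card_congr (Subgroup.subgroupOfEquivOfLe Subgroup.le_normalizer).toEquiv]
    _ ≤ Nat.card (pElementsOfCoset p (H.subgroupOf N) g') :=
        card_sylow_le_card_pElementsOfCoset Q' (isPElement_coe_iff.mp hgp)
    _ ≤ Nat.card (pElementsOfCoset p H g) := card_pElementsOfCoset_subgroupOf_le H g'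
end

section
/- Let G be a finite group, p a prime, N = N_1 × ⋯ × N_t a normal subgroup of G that is an internal direct product, and g a p-element of G normalizing each N_i. Then |𝔘_p(Ng)| = Π_{i=1}^t |𝔘_p(N_i g)|, where 𝔘_p(Xg) denotes the set of p-elements in the coset Xg. In particular |𝔘_p(N)| = Π_{i=1}^t |𝔘_p(N_i)|. -/
/-!
Write `q` for the `p`-part of `|G|`, so that the `p`-elements are exactly the solutions of
`x ^ q = 1`. For `n` in a subgroup normalized by `g`, the twisted power
`τₘ(n) = (n g) ^ m g⁻ᵐ = n · gng⁻¹ ⋯ g^{m-1}ng^{1-m}` lies in that subgroup.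
Since `g ^ q = 1`, `n g` is a `p`-element iff `τ_q(n) = 1`. Conjugation by `g` acts
componentwise on `N = N₁ × ⋯ × N_t`, so `τ_q` does too, and `n g` with `n = (n₁, …, n_t)`
is a `p`-element iff every `nᵢ g` is. Hence `n ↦ (nᵢ g)ᵢ` is the required bijection.
-/

open Subgroup

lemma isPElement_iff_pow_pPart_eq_one {G : Type*} [Group G] [Finite G] {p : ℕ} [Fact p.Prime]
    {x : G} :
    IsPElement p x ↔ x ^ pPart p (Nat.card G) = 1 := by
  have hp : p.Prime := Fact.out
  rw [← orderOf_dvd_iff_pow_eq_one, pPart, Nat.dvd_prime_pow hp, IsPElement]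
  constructor
  · rintro ⟨k, hk⟩
    refine ⟨k, ?_, hk⟩
    rw [← hp.pow_dvd_iff_le_factorization Nat.card_pos.ne', ← hk]
    exact orderOf_dvd_natCard x
  · rintro ⟨k, -, hk⟩
    exact ⟨k, hk⟩

section TwistedPow

variable {G : Type*} [Group G]

def twistedPow (g x : G) (m : ℕ) : G := (x * g) ^ m * g⁻¹ ^ m

variable {g x : G}

lemma twistedPow_zero : twistedPow g x 0 = 1 := by
  simp [twistedPow]

lemma twistedPow_succ (m : ℕ) : twistedPow g x (m + 1) = x * (g * twistedPow g x m * g⁻¹) := by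
  rw [twistedPow, twistedPow, pow_succ' (x * g), pow_succ g⁻¹]
  group

lemma twistedPow_mem {H : Subgroup G} (hg : g ∈ normalizer (H : Set G)) (hx : x ∈ H) (m : ℕ) :
    twistedPow g x m ∈ H := by
  induction m with
  | zero => rw [twistedPow_zero]; exact H.one_mem
  | succ m ih =>
    rw [twistedPow_succ]
    exact H.mul_mem hx ((mem_normalizer_iff.mp hg _).mp ih)

lemma mul_pow_eq_twistedPow {m : ℕ} (hgm : g ^ m = 1) : (x * g) ^ m = twistedPow g x m := by
  rw [twistedPow, inv_pow, hgm, inv_one, mul_one]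

end TwistedPow

section CommutingSubgroups

variable {G : Type*} [Group G] {ι : Type*} [Fintype ι] {N : ι → Subgroup G}
  {hcomm : Pairwise fun i j => ∀ x y : G, x ∈ N i → y ∈ N j → Commute x y}
  {g : G}

lemma conj_noncommPiCoprod (hg : ∀ i, g ∈ normalizer (N i : Set G)) (c : ∀ i, N i) :
    g * noncommPiCoprod hcomm c * g⁻¹ =
      noncommPiCoprod hcomm fun i =>
        ⟨g * c i * g⁻¹, (mem_normalizer_iff.mp (hg i) _).mp (c i).2⟩ := by
  rw [noncommPiCoprod_apply, noncommPiCoprod_apply, ← MulAut.conj_apply]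
  exact (Finset.map_noncommProd _ _ _ _).trans (Finset.noncommProd_congr rfl (fun _ _ => rfl) _)

lemma twistedPow_noncommPiCoprod (hg : ∀ i, g ∈ normalizer (N i : Set G)) (c : ∀ i, N i)
    (m : ℕ) :
    twistedPow g (noncommPiCoprod hcomm c) m =
      noncommPiCoprod hcomm fun i =>
        ⟨twistedPow g (c i) m, twistedPow_mem (hg i) (c i).2 m⟩ := by
  induction m with
  | zero => simp only [twistedPow_zero]; exact (map_one _).symm
  | succ m ih =>
    rw [twistedPow_succ, ih, conj_noncommPiCoprod hg, ← map_mul]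
    congr 1
    funext i
    exact Subtype.ext (twistedPow_succ m).symm

lemma isPElement_noncommPiCoprod_mul_iff [Finite G] {p : ℕ} [Fact p.Prime]
    (hind : iSupIndep N) (hg : ∀ i, g ∈ normalizer (N i : Set G)) (hgp : IsPElement p g)
    (c : ∀ i, N i) :
    IsPElement p (noncommPiCoprod hcomm c * g) ↔ ∀ i, IsPElement p ((c i : G) * g) := by
  have hgq := isPElement_iff_pow_pPart_eq_one.mp hgp
  simp only [isPElement_iff_pow_pPart_eq_one, mul_pow_eq_twistedPow hgq,
    twistedPow_noncommPiCoprod hg,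
    map_eq_one_iff _ (injective_noncommPiCoprod_of_iSupIndep hind), funext_iff, Pi.one_apply,
    ← Subtype.val_inj, OneMemClass.coe_one]

end CommutingSubgroups

lemma card_setOf_coset_mul {G : Type*} [Group G] (H : Subgroup G) (g : G) (P : G → Prop) :
    Nat.card {x : G | (∃ n ∈ H, x = n * g) ∧ P x} = Nat.card {n : H // P (n * g)} := by
  symm
  apply Nat.card_congr
  exact
    { toFun := fun n => ⟨n * g, ⟨n, n.1.2, rfl⟩, n.2⟩
      invFun := fun x => ⟨⟨x * g⁻¹, by obtain ⟨⟨n, hn, hx⟩, -⟩ := x.2; simpa [hx]⟩,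
        by simpa using x.2.2⟩
      left_inv := fun n => by simp
      right_inv := fun x => by simp }

theorem card_pElements_iSup_coset_eq_prod {G : Type*} [Group G] [Finite G] {p : ℕ}
    [Fact p.Prime] {ι : Type*} [Fintype ι] {N : ι → Subgroup G}
    (hcomm : Pairwise fun i j => ∀ x y : G, x ∈ N i → y ∈ N j → Commute x y)
    (hind : iSupIndep N) {g : G} (hg : ∀ i, g ∈ normalizer (N i : Set G))
    (hgp : IsPElement p g) :
    Nat.card {x : G | (∃ n ∈ ⨆ i, N i, x = n * g) ∧ IsPElement p x} =
      ∏ i, Nat.card {x : G | (∃ n ∈ N i, x = n * g) ∧ IsPElement p x} := by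
  simp only [card_setOf_coset_mul, ← noncommPiCoprod_range (hcomm := hcomm)]
  calc Nat.card {n : (noncommPiCoprod hcomm).range // IsPElement p (n * g)}
      _ = Nat.card {c : ∀ i, N i // IsPElement p (noncommPiCoprod hcomm c * g)} :=
        Nat.card_congr ((MonoidHom.ofInjective
          (injective_noncommPiCoprod_of_iSupIndep hind)).toEquiv.subtypeEquiv fun _ => Iff.rfl).symm
      _ = Nat.card {c : ∀ i, N i // ∀ i, IsPElement p ((c i : G) * g)} := by
        simp only [isPElement_noncommPiCoprod_mul_iff hind hg hgp]
      _ = Nat.card (∀ i, {n : N i // IsPElement p (n * g)}) :=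
        Nat.card_congr (Equiv.subtypePiEquivPi (p := fun i (n : N i) => IsPElement p (n * g)))
      _ = _ := Nat.card_pi

theorem stmt13_general {G : Type*} [Group G] [Finite G] (p : ℕ) [Fact p.Prime]
    (t : ℕ) (N : Fin t → Subgroup G)
    (hcomm : ∀ i j, i ≠ j → ∀ x ∈ N i, ∀ y ∈ N j, Commute x y)
    (hind : iSupIndep N)
    (g : G) (hgp : IsPElement p g) (hg : ∀ i, g ∈ Subgroup.normalizer (N i : Set G)) :
    Nat.card {x : G | (∃ n ∈ ⨆ i, N i, x = n * g) ∧ IsPElement p x} =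
        ∏ i : Fin t, Nat.card {x : G | (∃ n ∈ N i, x = n * g) ∧ IsPElement p x} ∧
      Nat.card {x : G | x ∈ (⨆ i, N i) ∧ IsPElement p x} =
        ∏ i : Fin t, Nat.card {x : G | x ∈ N i ∧ IsPElement p x} := by
  have hcomm' : Pairwise fun i j => ∀ x y : G, x ∈ N i → y ∈ N j → Commute x y :=
    fun i j hij x y hx hy => hcomm i j hij x hx y hy
  have hone : IsPElement p (1 : G) := ⟨0, by simp⟩
  refine ⟨card_pElements_iSup_coset_eq_prod hcomm' hind hg hgp, ?_⟩
  simpa using card_pElements_iSup_coset_eq_prod hcomm' hind (fun i => (normalizer _).one_mem) hone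

/-- If `N = N₁ × ⋯ × N_t` is a normal subgroup of `G` that is an internal direct
product of the `Nᵢ`, and `g` is a `p`-element normalizing each `Nᵢ`, then the number
of `p`-elements of the coset `Ng` is the product of the numbers of `p`-elements of the
cosets `Nᵢg`; in particular `|𝔘_p(N)| = ∏ᵢ |𝔘_p(Nᵢ)|`. -/
theorem stmt13 {G : Type*} [Group G] [Finite G] (p : ℕ) [Fact p.Prime]
    (t : ℕ) (N : Fin t → Subgroup G)
    (hcomm : ∀ i j, i ≠ j → ∀ x ∈ N i, ∀ y ∈ N j, Commute x y)
    (hind : iSupIndep N)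
    [(⨆ i, N i).Normal]
    (g : G) (hgp : IsPElement p g) (hg : ∀ i, g ∈ Subgroup.normalizer (N i : Set G)) :
    Nat.card {x : G | (∃ n ∈ ⨆ i, N i, x = n * g) ∧ IsPElement p x} =
        ∏ i : Fin t, Nat.card {x : G | (∃ n ∈ N i, x = n * g) ∧ IsPElement p x} ∧
      Nat.card {x : G | x ∈ (⨆ i, N i) ∧ IsPElement p x} =
        ∏ i : Fin t, Nat.card {x : G | x ∈ N i ∧ IsPElement p x} :=
  stmt13_general p t N hcomm hind g hgp hg
end
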